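/- arXiv:2309.04150 — 2 statements merged into one kernel-verified Lean document; each statement's English description precedes it below -/
import Mathlib

section
/- Let S ⊆ ℝ² be a compact convex body with nonempty interior, and let α : [0,1] → ℝ² be a line segment with α(0), α(1) ∈ frontier S, α(0) ≠ α(1), whose interior points lie in interior S. Then (interior S) \ (range α) has exactly two connected components. -/
/-!
A nonzero linear functional `f` on the plane vanishing on `b - a` cuts the open convex set
`interior S` into the open convex, hence connected, pieces `{f < f a}` and `{f > f a}`; both are
nonempty because `f` is an open map and `f a` is attained at the midpoint of the chord. The chord
is exactly the part of `interior S` on the level line `{f = f a}`: an interior point of that line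
beyond `b` would put `b` strictly between `a ∈ closure S` and an interior point, forcing `b` into
`interior S`.
-/

open Set AffineMap

theorem IsConnected.preimage_subtypeVal {X : Type*} [TopologicalSpace X] {s t : Set X}
    (ht : IsConnected t) (hts : t ⊆ s) : IsConnected ((Subtype.val : s → X) ⁻¹' t) := by
  obtain ⟨x, hx⟩ := ht.nonempty
  refine ⟨⟨⟨x, hts hx⟩, hx⟩, ?_⟩
  rw [← Topology.IsInducing.subtypeVal.isPreconnected_image, Subtype.image_preimage_coe,
    inter_eq_right.2 hts]
  exact ht.isPreconnected

theorem card_connectedComponents_union_eq_two {X : Type*} [TopologicalSpace X]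
    {U V : Set X} (hUo : IsOpen U) (hVo : IsOpen V) (hUc : IsConnected U) (hVc : IsConnected V)
    (hUV : Disjoint U V) : Nat.card (ConnectedComponents ↥(U ∪ V)) = 2 := by
  let W : Bool → Set ↥(U ∪ V) := fun i => Subtype.val ⁻¹' (bif i then U else V)
  have hcompl : (W true)ᶜ = W false := by
    ext ⟨x, hx⟩
    exact ⟨hx.resolve_left, fun hxV => hUV.notMem_of_mem_right hxV⟩
  have hopen (i : Bool) : IsOpen (W i) := by
    cases i
    · exact hVo.preimage continuous_subtype_val
    · exact hUo.preimage continuous_subtype_val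
  have hclopen (i : Bool) : IsClopen (W i) := by
    refine ⟨?_, hopen i⟩
    cases i
    · rw [← hcompl]; exact (hopen true).isClosed_compl
    · rw [← isOpen_compl_iff, hcompl]; exact hopen false
  have hdisj : Pairwise (Function.onFun Disjoint W) := by
    have : Disjoint (W true) (W false) := hcompl ▸ disjoint_compl_right
    rintro (_ | _) (_ | _) h <;> first | exact absurd rfl h | exact this | exact this.symm
  have hunion : ⋃ i, W i = univ := by
    rw [← union_compl_self (W true), hcompl]
    ext x; simp [or_comm]
  have hconn (i : Bool) : IsConnected (W i) := by
    cases i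
    · exact hVc.preimage_subtypeVal subset_union_right
    · exact hUc.preimage_subtypeVal subset_union_left
  rw [Nat.card_congr (ConnectedComponents.equivOfIsClopenOfIsConnected hclopen hdisj hunion hconn),
    Nat.card_eq_fintype_card, Fintype.card_bool]

theorem Submodule.exists_dual_ne_zero_ker_eq {K V : Type*} [Field K] [AddCommGroup V] [Module K V]
    [FiniteDimensional K V] (p : Submodule K V) (hp : Module.finrank K p + 1 = Module.finrank K V) :
    ∃ f : Module.Dual K V, f ≠ 0 ∧ LinearMap.ker f = p := by
  obtain ⟨f, hf0, hpf⟩ :=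
    p.exists_le_ker_of_lt_top (Submodule.lt_top_of_finrank_lt_finrank (by omega))
  refine ⟨f, hf0, (Submodule.eq_of_le_of_finrank_eq hpf ?_).symm⟩
  have := Module.Dual.finrank_ker_add_one_of_ne_zero hf0
  omega

section TVS
variable {E : Type*} [AddCommGroup E] [Module ℝ E] [TopologicalSpace E] [IsTopologicalAddGroup E]
  [ContinuousSMul ℝ E]

theorem Convex.le_one_of_lineMap_mem_interior {S : Set E} (hS : Convex ℝ S) {a b : E}
    (ha : a ∈ closure S) (hb : b ∉ interior S) {s : ℝ}
    (hs : lineMap a b s ∈ interior S) : s ≤ 1 := by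
  by_contra! h
  refine hb (hS.openSegment_closure_interior_subset_interior ha hs ?_)
  rw [openSegment_eq_image_lineMap]
  exact ⟨s⁻¹, ⟨by positivity, inv_lt_one_of_one_lt₀ h⟩, by
    rw [lineMap_lineMap_right, inv_mul_cancel₀ (by positivity), lineMap_apply_one]⟩

theorem Convex.mem_Icc_of_lineMap_mem_interior {S : Set E} (hS : Convex ℝ S) {a b : E}
    (ha : a ∈ frontier S) (hb : b ∈ frontier S) {s : ℝ}
    (hs : lineMap a b s ∈ interior S) : s ∈ Icc 0 1 := by
  refine ⟨?_, hS.le_one_of_lineMap_mem_interior ha.1 hb.2 hs⟩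
  have := hS.le_one_of_lineMap_mem_interior hb.1 ha.2 (s := 1 - s)
    (by rwa [lineMap_apply_one_sub])
  linarith

theorem Convex.interior_inter_segment_eq {S : Set E} (hS : Convex ℝ S) {a b : E}
    (ha : a ∈ frontier S) (hb : b ∈ frontier S) {f : E →ₗ[ℝ] ℝ}
    (hf : LinearMap.ker f = ℝ ∙ (b - a)) :
    interior S ∩ segment ℝ a b = interior S ∩ {x | f x = f a} := by
  have hfab : f a = f b := by
    rw [eq_comm, ← sub_eq_zero, ← map_sub, ← LinearMap.mem_ker, hf]
    exact Submodule.mem_span_singleton_self _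
  ext x
  refine and_congr_right fun hx => ⟨fun hxab => ?_, fun hfx => ?_⟩
  · exact (convex_hyperplane f.isLinear (f a)).segment_subset rfl hfab.symm hxab
  · obtain ⟨t, ht⟩ : ∃ t : ℝ, t • (b - a) = x - a := by
      rw [← Submodule.mem_span_singleton, ← hf, LinearMap.mem_ker, map_sub, sub_eq_zero]
      exact hfx
    have hxt : lineMap a b t = x := by
      rw [lineMap_apply, vsub_eq_sub, ht, vadd_eq_add, sub_add_cancel]
    rw [segment_eq_image_lineMap]
    exact ⟨t, hS.mem_Icc_of_lineMap_mem_interior ha hb (hxt ▸ hx), hxt⟩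

theorem Convex.card_connectedComponents_diff_levelSet {C : Set E} (hCc : Convex ℝ C)
    (hCo : IsOpen C) {f : StrongDual ℝ E} (hf : f ≠ 0) {c : ℝ} (hc : c ∈ f '' C) :
    Nat.card (ConnectedComponents ↥(C \ {x | f x = c})) = 2 := by
  obtain ⟨l, u, ⟨hlc, hcu⟩, hsub⟩ :=
    mem_nhds_iff_exists_Ioo_subset.1 ((f.isOpenMap_of_ne_zero hf C hCo).mem_nhds hc)
  obtain ⟨y, hly, hyc⟩ := exists_between hlc
  obtain ⟨z, hcz, hzu⟩ := exists_between hcu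
  obtain ⟨x₁, hx₁C, rfl⟩ := hsub ⟨hly, hyc.trans hcu⟩
  obtain ⟨x₂, hx₂C, rfl⟩ := hsub ⟨hlc.trans hcz, hzu⟩
  have hsplit : C \ {x | f x = c} = (C ∩ {x | f x < c}) ∪ (C ∩ {x | c < f x}) := by
    ext x
    simp only [mem_sdiff, mem_ofPred_eq, mem_union, mem_inter_iff, ← and_or_left, ne_iff_lt_or_gt]
  rw [hsplit]
  refine card_connectedComponents_union_eq_two
    (hCo.inter (isOpen_lt (by fun_prop) continuous_const))
    (hCo.inter (isOpen_lt continuous_const (by fun_prop)))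
    ((hCc.inter (convex_halfSpace_lt f.toLinearMap.isLinear c)).isConnected ⟨x₁, hx₁C, hyc⟩)
    ((hCc.inter (convex_halfSpace_gt f.toLinearMap.isLinear c)).isConnected ⟨x₂, hx₂C, hcz⟩)
    (disjoint_left.2 fun _ hx₁ hx₂ => lt_asymm (α := ℝ) hx₁.2 hx₂.2)

end TVS

theorem chord_splits_interior_into_two_components_general
    (S : Set (EuclideanSpace ℝ (Fin 2)))
    (hSconv : Convex ℝ S)
    (a b : EuclideanSpace ℝ (Fin 2))
    (ha : a ∈ frontier S) (hb : b ∈ frontier S) (hab : a ≠ b)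
    (α : ℝ → EuclideanSpace ℝ (Fin 2))
    (hα : ∀ t : ℝ, α t = (1 - t) • a + t • b)
    (hint : ∀ t ∈ Ioo (0:ℝ) 1, α t ∈ interior S) :
    Nat.card (ConnectedComponents ↥(interior S \ α '' Icc (0:ℝ) 1)) = 2 := by
  have hseg : α '' Icc 0 1 = segment ℝ a b := by
    rw [segment_eq_image]
    exact image_congr fun t _ => hα t
  obtain ⟨f, hf0, hker⟩ := (ℝ ∙ (b - a)).exists_dual_ne_zero_ker_eq (by
    rw [finrank_span_singleton (sub_ne_zero.2 hab.symm), finrank_euclideanSpace_fin])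
  have hchord := hSconv.interior_inter_segment_eq ha hb hker
  have hhalf : (1 / 2 : ℝ) ∈ Ioo 0 1 := by norm_num
  have hmid : α (1 / 2) ∈ interior S ∩ segment ℝ a b :=
    ⟨hint _ hhalf, hseg ▸ mem_image_of_mem α (Ioo_subset_Icc_self hhalf)⟩
  rw [hchord] at hmid
  rw [hseg, ← sdiff_self_inter, hchord, sdiff_self_inter]
  exact hSconv.interior.card_connectedComponents_diff_levelSet isOpen_interior
    (f := LinearMap.toContinuousLinearMap f) (by simpa using hf0) ⟨α (1 / 2), hmid⟩

theorem chord_splits_interior_into_two_components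
    (S : Set (EuclideanSpace ℝ (Fin 2)))
    (hScomp : IsCompact S) (hSconv : Convex ℝ S)
    (hSint : (interior S).Nonempty)
    (a b : EuclideanSpace ℝ (Fin 2))
    (ha : a ∈ frontier S) (hb : b ∈ frontier S) (hab : a ≠ b)
    (α : ℝ → EuclideanSpace ℝ (Fin 2))
    (hα : ∀ t : ℝ, α t = (1 - t) • a + t • b)
    (hint : ∀ t ∈ Ioo (0:ℝ) 1, α t ∈ interior S) :
    Nat.card (ConnectedComponents ↥(interior S \ α '' Icc (0:ℝ) 1)) = 2 :=
  chord_splits_interior_into_two_components_general S hSconv a b ha hb hab α hα hint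
end

section
/- Through any point q outside a compact strictly convex body K ⊆ ℝ² with nonempty interior, there exist exactly two lines through q tangent to K. -/
open Set

def IsLine (L : Set (EuclideanSpace ℝ (Fin 2))) : Prop :=
  ∃ a v : EuclideanSpace ℝ (Fin 2), v ≠ 0 ∧ L = {x | ∃ t : ℝ, x = a + t • v}

def IsTangentLine (L K : Set (EuclideanSpace ℝ (Fin 2))) : Prop :=
  (L ∩ K).Nonempty ∧ L ∩ interior K = ∅

/-!
Separate `q` from `K` by a linear functional `φ`, and complete it by a second functional `ψ`
to coordinates of the plane. On the half-plane beyond `q` containing `K`, the slope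
`ψ (x - q) / φ (x - q)` is continuous and constant exactly along the lines through `q`, so the
lines through `q` meeting `K` correspond to the values of the slope on `K`. An interior point
never carries an extreme value (move it along `ker φ`), while by convexity and the intermediate
value theorem every non-extreme value is attained at an interior point. Hence the tangent lines
are the two lines on which the slope attains its minimum and its maximum over the compact `K`,
and these differ because the interior of `K` is nonempty.
-/

open Filter Topology

section ConvexExtrema

variable {E : Type*} [AddCommGroup E] [Module ℝ E] [TopologicalSpace E] [IsTopologicalAddGroup E]
  [ContinuousSMul ℝ E] {K : Set E} {f : E → ℝ}

theorem not_isExtrOn_of_mem_interior {x v : E} {a : ℝ} (hx : x ∈ interior K)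
    (hf : ∀ t : ℝ, f (x + t • v) = f x + t * a) (ha : a ≠ 0) : ¬IsExtrOn f K x := by
  have hnear : ∀ᶠ s in 𝓝 (0 : ℝ), x + (s * a) • v ∈ K := by
    have : Tendsto (fun s : ℝ => x + (s * a) • v) (𝓝 0) (𝓝 x) := by
      simpa using (show Continuous fun s : ℝ => x + (s * a) • v by fun_prop).tendsto 0
    exact this (mem_interior_iff_mem_nhds.1 hx)
  obtain ⟨s, hsK, hs⟩ := ((hnear.filter_mono nhdsWithin_le_nhds).and
    (self_mem_nhdsWithin : Ioi (0 : ℝ) ∈ 𝓝[>] 0)).exists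
  obtain ⟨r, hrK, hr⟩ := ((hnear.filter_mono nhdsWithin_le_nhds).and
    (self_mem_nhdsWithin : Iio (0 : ℝ) ∈ 𝓝[<] 0)).exists
  have hs' : f x < f (x + (s * a) • v) := by
    rw [hf, mul_assoc]; nlinarith [mul_pos (show (0 : ℝ) < s from hs) (mul_self_pos.2 ha)]
  have hr' : f (x + (r * a) • v) < f x := by
    rw [hf, mul_assoc]; nlinarith [mul_neg_of_neg_of_pos (show r < 0 from hr) (mul_self_pos.2 ha)]
  rintro (hmin | hmax)
  · exact (hmin hrK).not_gt hr'
  · exact (hmax hsK).not_gt hs'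

theorem Convex.exists_mem_interior_eq_of_mem_uIcc (hK : Convex ℝ K) (hf : ContinuousOn f K)
    {p x : E} (hp : p ∈ K) (hx : x ∈ interior K) {c : ℝ} (hc : c ∈ uIcc (f p) (f x))
    (hcp : c ≠ f p) : ∃ y ∈ interior K, f y = c := by
  have hseg : ∀ t ∈ Ioc (0 : ℝ) 1, p + t • (x - p) ∈ interior K :=
    fun t ht => hK.add_smul_sub_mem_interior hp hx ht
  have hcont : ContinuousOn (fun t : ℝ => f (p + t • (x - p))) (uIcc 0 1) := by
    refine hf.comp (by fun_prop) fun t ht => ?_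
    rw [uIcc_of_le zero_le_one] at ht
    rcases ht.1.eq_or_lt with rfl | ht0
    · simpa using hp
    · exact interior_subset (hseg t ⟨ht0, ht.2⟩)
  obtain ⟨t, ht, htc⟩ := intermediate_value_uIcc hcont (by simpa using hc)
  rw [uIcc_of_le zero_le_one] at ht
  rcases ht.1.eq_or_lt with rfl | ht0
  · exact absurd (by simpa using htc.symm) hcp
  · exact ⟨_, hseg t ⟨ht0, ht.2⟩, htc⟩

theorem Convex.exists_mem_interior_eq_of_not_isExtrOn (hK : Convex ℝ K) (hf : ContinuousOn f K)
    (hint : (interior K).Nonempty) {p : E} (hp : ¬IsExtrOn f K p) :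
    ∃ y ∈ interior K, f y = f p := by
  have hmin : ¬IsMinOn f K p := fun h => hp h.isExtr
  have hmax : ¬IsMaxOn f K p := fun h => hp h.isExtr
  simp only [isMinOn_iff, isMaxOn_iff, not_forall, not_le, exists_prop] at hmin hmax
  obtain ⟨y₁, hy₁, h₁⟩ := hmin
  obtain ⟨y₂, hy₂, h₂⟩ := hmax
  obtain ⟨x, hx⟩ := hint
  rcases le_total (f p) (f x) with hpx | hxp
  · exact hK.exists_mem_interior_eq_of_mem_uIcc hf hy₁ hx (mem_uIcc_of_le h₁.le hpx) h₁.ne'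
  · exact hK.exists_mem_interior_eq_of_mem_uIcc hf hy₂ hx (mem_uIcc_of_ge hxp h₂.le) h₂.ne

end ConvexExtrema

section ViewSlope

variable {E : Type*} [AddCommGroup E] [Module ℝ E]

def lineThrough (q p : E) : Set E := {x | ∃ t : ℝ, x = q + t • (p - q)}

theorem lineThrough_eq_of_mem {q p p' : E} (hp : p ∈ lineThrough q p') (hpq : p ≠ q) :
    lineThrough q p = lineThrough q p' := by
  obtain ⟨s, rfl⟩ := hp
  have hs : s ≠ 0 := by rintro rfl; simp at hpq
  ext x
  constructor
  · rintro ⟨t, rfl⟩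
    exact ⟨t * s, by simp [mul_smul]⟩
  · rintro ⟨t, rfl⟩
    exact ⟨t / s, by simp [smul_smul, div_mul_cancel₀ _ hs]⟩

variable [TopologicalSpace E] (φ ψ : E →L[ℝ] ℝ) (q : E)

noncomputable def viewSlope (x : E) : ℝ := ψ (x - q) / φ (x - q)

variable {φ ψ q}

theorem viewSlope_of_mem_lineThrough {x y : E} (hy : y ∈ lineThrough q x) (hφy : φ (y - q) ≠ 0) :
    viewSlope φ ψ q y = viewSlope φ ψ q x := by
  obtain ⟨t, rfl⟩ := hy
  have ht : t ≠ 0 := by rintro rfl; simp at hφy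
  simp only [viewSlope, add_sub_cancel_left, map_smul, smul_eq_mul, mul_div_mul_left _ _ ht]

theorem mem_lineThrough_of_viewSlope_eq (hinj : ∀ d, φ d = 0 → ψ d = 0 → d = 0) {x y : E}
    (hφx : φ (x - q) ≠ 0) (hφy : φ (y - q) ≠ 0) (hxy : viewSlope φ ψ q x = viewSlope φ ψ q y) :
    y ∈ lineThrough q x := by
  rw [viewSlope, viewSlope, div_eq_div_iff hφx hφy] at hxy
  refine ⟨φ (y - q) / φ (x - q), ?_⟩
  set a := x - q
  set b := y - q
  have hb : b = (φ b / φ a) • a := by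
    refine sub_eq_zero.1 (hinj _ ?_ ?_)
    · rw [map_sub, map_smul, smul_eq_mul, div_mul_cancel₀ _ hφx, sub_self]
    · rw [map_sub, map_smul, smul_eq_mul, div_mul_eq_mul_div, mul_comm (φ b), hxy,
        mul_div_cancel_right₀ _ hφx, sub_self]
  rw [← hb, add_sub_cancel]

theorem lineThrough_eq_lineThrough_iff (hinj : ∀ d, φ d = 0 → ψ d = 0 → d = 0) {p p' : E}
    (hp : φ (p - q) ≠ 0) (hp' : φ (p' - q) ≠ 0) :
    lineThrough q p = lineThrough q p' ↔ viewSlope φ ψ q p = viewSlope φ ψ q p' := by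
  constructor
  · intro h
    exact viewSlope_of_mem_lineThrough (h ▸ ⟨1, by simp⟩ : p ∈ lineThrough q p') hp
  · intro h
    exact lineThrough_eq_of_mem (mem_lineThrough_of_viewSlope_eq hinj hp' hp h.symm)
      fun hpq => hp (by simp [hpq])

theorem continuousOn_viewSlope [IsTopologicalAddGroup E] {K : Set E}
    (hK : ∀ x ∈ K, φ (x - q) ≠ 0) : ContinuousOn (viewSlope φ ψ q) K :=
  ContinuousOn.div (by fun_prop) (by fun_prop) hK

theorem viewSlope_add_smul {v : E} (hv : φ v = 0) (x : E) (t : ℝ) :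
    viewSlope φ ψ q (x + t • v) = viewSlope φ ψ q x + t * (ψ v / φ (x - q)) := by
  have : x + t • v - q = (x - q) + t • v := by abel
  rw [viewSlope, viewSlope, this, map_add, map_add, map_smul, map_smul, hv, smul_zero, add_zero,
    add_div, smul_eq_mul, mul_div_assoc]

theorem image_lineThrough_setOf_isExtrOn (hφK : ∀ x ∈ K, φ (x - q) ≠ 0)
    (hinj : ∀ d, φ d = 0 → ψ d = 0 → d = 0) {p₁ p₂ : E} (hp₁ : p₁ ∈ K) (hp₂ : p₂ ∈ K)
    (hmin : IsMinOn (viewSlope φ ψ q) K p₁) (hmax : IsMaxOn (viewSlope φ ψ q) K p₂) :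
    lineThrough q '' {p ∈ K | IsExtrOn (viewSlope φ ψ q) K p} =
      {lineThrough q p₁, lineThrough q p₂} := by
  ext L
  simp only [mem_image, mem_ofPred_eq, mem_insert_iff, mem_singleton_iff]
  constructor
  · rintro ⟨p, ⟨hp, hpmin | hpmax⟩, rfl⟩
    · exact .inl ((lineThrough_eq_lineThrough_iff hinj (hφK p hp) (hφK p₁ hp₁)).2
        (le_antisymm (hpmin hp₁) (hmin hp)))
    · exact .inr ((lineThrough_eq_lineThrough_iff hinj (hφK p hp) (hφK p₂ hp₂)).2
        (le_antisymm (hmax hp) (hpmax hp₂)))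
  · rintro (rfl | rfl)
    exacts [⟨p₁, ⟨hp₁, hmin.isExtr⟩, rfl⟩, ⟨p₂, ⟨hp₂, hmax.isExtr⟩, rfl⟩]

end ViewSlope

section SupportingLines

variable {E : Type*} [AddCommGroup E] [Module ℝ E] [TopologicalSpace E] [IsTopologicalAddGroup E]
  [ContinuousSMul ℝ E] {φ ψ : E →L[ℝ] ℝ} {q : E} {K : Set E}

theorem lineThrough_inter_interior_eq_empty_iff (hK : Convex ℝ K) (hint : (interior K).Nonempty)
    (hφK : ∀ x ∈ K, φ (x - q) ≠ 0) (hinj : ∀ d, φ d = 0 → ψ d = 0 → d = 0) {v : E}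
    (hv : φ v = 0) (hψv : ψ v ≠ 0) {p : E} (hp : p ∈ K) :
    lineThrough q p ∩ interior K = ∅ ↔ IsExtrOn (viewSlope φ ψ q) K p := by
  constructor
  · intro hempty
    by_contra hext
    obtain ⟨y, hy, hyp⟩ :=
      hK.exists_mem_interior_eq_of_not_isExtrOn (continuousOn_viewSlope hφK) hint hext
    exact eq_empty_iff_forall_notMem.1 hempty y
      ⟨mem_lineThrough_of_viewSlope_eq hinj (hφK p hp) (hφK y (interior_subset hy)) hyp.symm, hy⟩
  · intro hext
    refine eq_empty_iff_forall_notMem.2 fun y ⟨hyl, hy⟩ => ?_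
    have hyq : φ (y - q) ≠ 0 := hφK y (interior_subset hy)
    have hyp : viewSlope φ ψ q y = viewSlope φ ψ q p := viewSlope_of_mem_lineThrough hyl hyq
    refine not_isExtrOn_of_mem_interior hy (viewSlope_add_smul hv y) (div_ne_zero hψv hyq) ?_
    simpa [IsExtrOn, IsExtrFilter, IsMinFilter, IsMaxFilter, hyp] using hext

theorem ncard_image_lineThrough_of_inter_interior_eq_empty (hcomp : IsCompact K)
    (hK : Convex ℝ K) (hint : (interior K).Nonempty) (hφK : ∀ x ∈ K, φ (x - q) ≠ 0)
    (hinj : ∀ d, φ d = 0 → ψ d = 0 → d = 0) {v : E} (hv : φ v = 0) (hψv : ψ v ≠ 0) :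
    (lineThrough q '' {p ∈ K | lineThrough q p ∩ interior K = ∅}).ncard = 2 := by
  have hcont := continuousOn_viewSlope (ψ := ψ) hφK
  obtain ⟨p₁, hp₁, hmin⟩ := hcomp.exists_isMinOn (hint.mono interior_subset) hcont
  obtain ⟨p₂, hp₂, hmax⟩ := hcomp.exists_isMaxOn (hint.mono interior_subset) hcont
  have hne : lineThrough q p₁ ≠ lineThrough q p₂ := by
    rw [Ne, lineThrough_eq_lineThrough_iff hinj (hφK p₁ hp₁) (hφK p₂ hp₂)]
    intro heq
    obtain ⟨x, hx⟩ := hint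
    have hxK := interior_subset hx
    refine not_isExtrOn_of_mem_interior hx (viewSlope_add_smul hv x)
      (div_ne_zero hψv (hφK x hxK)) (IsMinOn.isExtr (isMinOn_iff.2 fun z hz => ?_))
    exact (hmax hxK).trans (heq ▸ hmin hz)
  rw [sep_ext_iff.2 fun p hp => lineThrough_inter_interior_eq_empty_iff hK hint hφK hinj hv hψv hp,
    image_lineThrough_setOf_isExtrOn hφK hinj hp₁ hp₂ hmin hmax, ncard_pair hne]

end SupportingLines

theorem exists_functional_complement_of_finrank_eq_two {F : Type*} [NormedAddCommGroup F]
    [InnerProductSpace ℝ F] [Fact (Module.finrank ℝ F = 2)] {φ : F →L[ℝ] ℝ} (hφ : φ ≠ 0) :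
    ∃ (ψ : F →L[ℝ] ℝ) (v : F), φ v = 0 ∧ ψ v ≠ 0 ∧ ∀ d, φ d = 0 → ψ d = 0 → d = 0 := by
  have := FiniteDimensional.of_fact_finrank_eq_two (K := ℝ) (V := F)
  let o : Orientation ℝ F (Fin 2) := (Module.finBasisOfFinrankEq ℝ F Fact.out).orientation
  set w := (InnerProductSpace.toDual ℝ F).symm φ
  have hφw : ∀ x, φ x = inner ℝ w x := fun x => InnerProductSpace.toDual_symm_apply.symm
  have hw : w ≠ 0 := by
    rintro hw
    exact hφ (ContinuousLinearMap.ext fun x => by simp [hφw, hw])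
  refine ⟨innerSL ℝ (o.rightAngleRotation w), o.rightAngleRotation w, ?_, ?_, fun d hφd hψd => ?_⟩
  · rw [hφw, real_inner_comm, o.inner_rightAngleRotation_self]
  · simpa using hw
  · rw [hφw] at hφd
    rw [innerSL_apply_apply, o.inner_rightAngleRotation_left] at hψd
    have := o.inner_sq_add_areaForm_sq w d
    rw [hφd, hψd] at this
    simpa [hw] using this

local notation "ℝ²" => EuclideanSpace ℝ (Fin 2)

theorem isLine_lineThrough {q p : ℝ²} (h : p ≠ q) : IsLine (lineThrough q p) :=
  ⟨q, p - q, sub_ne_zero.2 h, rfl⟩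

theorem IsLine.eq_lineThrough {L : Set ℝ²} (hL : IsLine L) {q p : ℝ²} (hq : q ∈ L) (hp : p ∈ L)
    (hpq : p ≠ q) : L = lineThrough q p := by
  obtain ⟨a, v, hv, rfl⟩ := hL
  obtain ⟨s, rfl⟩ := hq
  have hL : {x : ℝ² | ∃ t : ℝ, x = a + t • v} = lineThrough (a + s • v) (a + s • v + v) := by
    ext x
    simp only [lineThrough, mem_ofPred_eq, add_sub_cancel_left]
    constructor
    · rintro ⟨t, rfl⟩; exact ⟨t - s, by module⟩
    · rintro ⟨t, rfl⟩; exact ⟨s + t, by module⟩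
  rw [hL] at hp ⊢
  exact (lineThrough_eq_of_mem hp hpq).symm

theorem setOf_isTangentLine_eq_image {K : Set ℝ²} {q : ℝ²} (hq : q ∉ K) :
    {L | IsLine L ∧ q ∈ L ∧ IsTangentLine L K} =
      lineThrough q '' {p ∈ K | lineThrough q p ∩ interior K = ∅} := by
  ext L
  constructor
  · rintro ⟨hL, hqL, ⟨p, hpL, hpK⟩, hempty⟩
    have hLp := hL.eq_lineThrough hqL hpL (ne_of_mem_of_not_mem hpK hq)
    exact ⟨p, ⟨hpK, hLp ▸ hempty⟩, hLp.symm⟩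
  · rintro ⟨p, ⟨hpK, hempty⟩, rfl⟩
    exact ⟨isLine_lineThrough (ne_of_mem_of_not_mem hpK hq), ⟨0, by simp⟩,
      ⟨p, ⟨1, by simp⟩, hpK⟩, hempty⟩

theorem exactly_two_tangent_lines_through_exterior_point_general
    (K : Set (EuclideanSpace ℝ (Fin 2)))
    (hcomp : IsCompact K) (hconv : Convex ℝ K) (hint : (interior K).Nonempty)
    (q : EuclideanSpace ℝ (Fin 2)) (hq : q ∉ K) :
    {L | IsLine L ∧ q ∈ L ∧ IsTangentLine L K}.ncard = 2 := by
  obtain ⟨φ, c, hφq, hφc⟩ := geometric_hahn_banach_point_closed hconv hcomp.isClosed hq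
  have hφK : ∀ x ∈ K, φ (x - q) ≠ 0 := fun x hx => by
    rw [map_sub]; linarith [hφc x hx]
  have hφ : φ ≠ 0 := by
    rintro rfl
    obtain ⟨x, hx⟩ := hint
    exact hφK x (interior_subset hx) rfl
  have : Fact (Module.finrank ℝ ℝ² = 2) := ⟨finrank_euclideanSpace_fin⟩
  obtain ⟨ψ, v, hv, hψv, hinj⟩ := exists_functional_complement_of_finrank_eq_two hφ
  rw [setOf_isTangentLine_eq_image hq]
  exact ncard_image_lineThrough_of_inter_interior_eq_empty hcomp hconv hint hφK hinj hv hψv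

theorem exactly_two_tangent_lines_through_exterior_point
    (K : Set (EuclideanSpace ℝ (Fin 2)))
    (hcomp : IsCompact K) (hconv : Convex ℝ K) (hint : (interior K).Nonempty)
    (hstrict : ∀ x ∈ K, ∀ y ∈ K, x ≠ y → ∀ t ∈ Ioo (0:ℝ) 1,
      (1 - t) • x + t • y ∈ interior K)
    (q : EuclideanSpace ℝ (Fin 2)) (hq : q ∉ K) :
    {L | IsLine L ∧ q ∈ L ∧ IsTangentLine L K}.ncard = 2 :=
  exactly_two_tangent_lines_through_exterior_point_general K hcomp hconv hint q hq
end
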